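/- Let a : [1,∞) → [1,∞) be a continuous, strictly increasing, unbounded function with a(1) = 1 whose inverse a⁻¹ is regularly varying at infinity with index α > 0. Assume sup_{m≥1} P(S_m < 0) < 1 and sup_{m≥1} P(S_m > 0) < 1, and assume there exists a constant C such that for all integers n ≥ 1 and all reals x ≥ 1: P(S_n > x) ≤ C·n/a⁻¹(x) and P(S_n < −x) ≤ C·n/a⁻¹(x). Then there exists a constant C′ such that for all integers n ≥ 1 and all reals x ≥ 1: P(max_{0≤k≤n} S_k > x) ≤ C′·n/a⁻¹(x), P(−min_{0≤k≤n} S_k > x) ≤ C′·n/a⁻¹(x), P(max_{0≤k≤n} |S_k| > x) ≤ C′·n/a⁻¹(x), and P(V^#_n > x) ≤ C′·n/a⁻¹(x). -/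

import Mathlib

/-!
Let `k` be the first time the walk exceeds `x`. Since `S_k` and `S_n - S_k` are independent and
`S_n - S_k` is distributed as `S_{n-k}`, which is nonnegative with probability at least `1 - c`
(`c` bounding every `P(S_m < 0)`), summing over `k` gives
`(1 - c) P(max_k S_k > x) ≤ P(S_n > x)`; applied to `ξ` and to `-ξ` this bounds the maximum and
the negated minimum. The other two bounds follow from `max_k |S_k| ≤ max (max S) (-min S)` and
`V^#_n ≤ max S - min S`, the latter at the price of passing from `x` to `x / 2`, which costs only
a constant factor because `a⁻¹(2x) / a⁻¹(x) → 2^α` and `a⁻¹` is monotone.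
-/

open MeasureTheory ProbabilityTheory Filter

noncomputable section

/-- The random walk `S_n = ξ₁ + ⋯ + ξ_n` associated with the steps `ξ`. -/
def walk {Ω : Type*} (ξ : ℕ → Ω → ℝ) (n : ℕ) (ω : Ω) : ℝ :=
  ∑ i ∈ Finset.range n, ξ i ω

/-- `max_{0 ≤ k ≤ n} S_k`. -/
def walkMax {Ω : Type*} (ξ : ℕ → Ω → ℝ) (n : ℕ) (ω : Ω) : ℝ :=
  (Finset.range (n + 1)).sup' Finset.nonempty_range_add_one fun k => walk ξ k ω

/-- `min_{0 ≤ k ≤ n} S_k`. -/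
def walkMin {Ω : Type*} (ξ : ℕ → Ω → ℝ) (n : ℕ) (ω : Ω) : ℝ :=
  (Finset.range (n + 1)).inf' Finset.nonempty_range_add_one fun k => walk ξ k ω

/-- `V^#_n = max_{0 ≤ u ≤ v ≤ n} (S_v - S_u)`, the supremum of the reflected walk. -/
def reflMax {Ω : Type*} (ξ : ℕ → Ω → ℝ) (n : ℕ) (ω : Ω) : ℝ :=
  (Finset.range (n + 1)).sup' Finset.nonempty_range_add_one fun v =>
    (Finset.range (v + 1)).sup' Finset.nonempty_range_add_one fun u =>
      walk ξ v ω - walk ξ u ω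

/-- `max_{0 ≤ k ≤ n} |S_k|`. -/
def walkAbsMax {Ω : Type*} (ξ : ℕ → Ω → ℝ) (n : ℕ) (ω : Ω) : ℝ :=
  (Finset.range (n + 1)).sup' Finset.nonempty_range_add_one fun k => |walk ξ k ω|

section Walk

variable {Ω : Type*} (ξ : ℕ → Ω → ℝ)

lemma walk_neg (k : ℕ) (ω : Ω) : walk (fun i ω => -ξ i ω) k ω = -walk ξ k ω := by
  simp [walk]

lemma walk_le_walkMax {k n : ℕ} (hk : k ≤ n) (ω : Ω) : walk ξ k ω ≤ walkMax ξ n ω :=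
  Finset.le_sup' (fun k => walk ξ k ω) (Finset.mem_range_succ_iff.2 hk)

lemma walkMin_le_walk {k n : ℕ} (hk : k ≤ n) (ω : Ω) : walkMin ξ n ω ≤ walk ξ k ω :=
  Finset.inf'_le (fun k => walk ξ k ω) (Finset.mem_range_succ_iff.2 hk)

lemma walkMax_neg (n : ℕ) (ω : Ω) : walkMax (fun i ω => -ξ i ω) n ω = -walkMin ξ n ω := by
  refine le_antisymm (Finset.sup'_le _ _ fun k hk => ?_) ?_
  · rw [walk_neg]
    exact neg_le_neg (walkMin_le_walk ξ (Finset.mem_range_succ_iff.1 hk) ω)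
  · rw [neg_le]
    refine Finset.le_inf' _ _ fun k hk => neg_le.1 ?_
    rw [← walk_neg]
    exact walk_le_walkMax _ (Finset.mem_range_succ_iff.1 hk) ω

lemma walkAbsMax_le (n : ℕ) (ω : Ω) :
    walkAbsMax ξ n ω ≤ max (walkMax ξ n ω) (-walkMin ξ n ω) :=
  Finset.sup'_le _ _ fun k hk => by
    rw [abs_eq_max_neg]
    have hk := Finset.mem_range_succ_iff.1 hk
    exact max_le_max (walk_le_walkMax ξ hk ω) (neg_le_neg (walkMin_le_walk ξ hk ω))

lemma reflMax_le_walkMax_sub_walkMin (n : ℕ) (ω : Ω) :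
    reflMax ξ n ω ≤ walkMax ξ n ω - walkMin ξ n ω :=
  Finset.sup'_le _ _ fun v hv => Finset.sup'_le _ _ fun u hu => by
    rw [Finset.mem_range_succ_iff] at hu hv
    exact sub_le_sub (walk_le_walkMax ξ hv ω) (walkMin_le_walk ξ (hu.trans hv) ω)

end Walk

section Probability

variable {Ω : Type*} {ξ : ℕ → Ω → ℝ}

lemma measurable_sum_of_subset (S : Set ℕ) {s : Finset ℕ} (hs : ↑s ⊆ S) :
    Measurable[⨆ i ∈ S, MeasurableSpace.comap (ξ i) inferInstance]
      fun ω => ∑ i ∈ s, ξ i ω :=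
  Finset.measurable_sum _ fun i hi => Measurable.of_comap_le
    (le_iSup₂ (f := fun i (_ : i ∈ S) => MeasurableSpace.comap (ξ i) inferInstance) i (hs hi))

variable [MeasurableSpace Ω] {P : Measure Ω}

lemma measurable_walk (hmeas : ∀ i, Measurable (ξ i)) (n : ℕ) : Measurable (walk ξ n) :=
  Finset.measurable_sum _ fun i _ => hmeas i

lemma identDistrib_sum_shift (hindep : iIndepFun ξ P)
    (hident : ∀ i, IdentDistrib (ξ i) (ξ 0) P P) (k m : ℕ) :
    IdentDistrib (fun ω => ∑ i ∈ Finset.range m, ξ (k + i) ω) (walk ξ m) P P :=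
  (IdentDistrib.pi (fun i => (hident (k + i)).trans (hident i).symm)
    (hindep.precomp (add_right_injective k)) hindep).comp
    (u := fun v : ℕ → ℝ => ∑ i ∈ Finset.range m, v i)
    (Finset.measurable_sum _ fun i _ => measurable_pi_apply i)

lemma measure_inter_eq_mul_of_past_future (hmeas : ∀ i, Measurable (ξ i))
    (hindep : iIndepFun ξ P) (k : ℕ) {A B : Set Ω}
    (hA : MeasurableSet[⨆ i ∈ {i | i < k}, MeasurableSpace.comap (ξ i) inferInstance] A)
    (hB : MeasurableSet[⨆ i ∈ {i | k ≤ i}, MeasurableSpace.comap (ξ i) inferInstance] B) :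
    P (A ∩ B) = P A * P B := by
  refine (Indep_iff _ _ _).1 (indep_iSup_of_disjoint (fun i => (hmeas i).comap_le)
    hindep ?_) _ _ hA hB
  exact Set.disjoint_left.2 fun i (h₁ : i < k) (h₂ : k ≤ i) => by omega

end Probability

section Ottaviani

variable {Ω : Type*} {ξ : ℕ → Ω → ℝ}

def firstPassage (ξ : ℕ → Ω → ℝ) (x : ℝ) (k : ℕ) : Set Ω :=
  {ω | x < walk ξ k ω ∧ ∀ j < k, walk ξ j ω ≤ x}

lemma measurableSet_firstPassage {m : MeasurableSpace Ω} {x : ℝ} {k : ℕ}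
    (hw : ∀ j ≤ k, Measurable[m] (walk ξ j)) : MeasurableSet[m] (firstPassage ξ x k) := by
  simp only [firstPassage, Set.ofPred_and, Set.ofPred_forall]
  exact (measurableSet_lt measurable_const (hw k le_rfl)).inter <| MeasurableSet.iInter
    fun j => MeasurableSet.iInter fun hj => measurableSet_le (hw j hj.le) measurable_const

lemma pairwise_disjoint_firstPassage (x : ℝ) :
    Pairwise (Function.onFun Disjoint (firstPassage ξ x)) := by
  refine pairwise_disjoint_on _ |>.2 fun k l hkl => Set.disjoint_left.2 ?_
  exact fun ω hk hl => (hl.2 k hkl).not_gt hk.1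

lemma setOf_lt_walkMax_eq_biUnion_firstPassage (x : ℝ) (n : ℕ) :
    {ω | x < walkMax ξ n ω} = ⋃ k ∈ Finset.range (n + 1), firstPassage ξ x k := by
  ext ω
  simp only [Set.mem_ofPred_eq, Set.mem_iUnion, walkMax, Finset.lt_sup'_iff, firstPassage,
    exists_prop]
  constructor
  · rintro ⟨k, hk, hxk⟩
    have hex : ∃ j, x < walk ξ j ω := ⟨k, hxk⟩
    refine ⟨Nat.find hex, ?_, Nat.find_spec hex, fun j hj => not_lt.1 (Nat.find_min hex hj)⟩
    exact Finset.mem_range.2 ((Nat.find_min' hex hxk).trans_lt (Finset.mem_range.1 hk))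
  · rintro ⟨k, hk, hxk, -⟩
    exact ⟨k, hk, hxk⟩

lemma firstPassage_inter_subset {x : ℝ} {k n : ℕ} (hkn : k ≤ n) :
    firstPassage ξ x k ∩ {ω | 0 ≤ ∑ i ∈ Finset.Ico k n, ξ i ω} ⊆ {ω | x < walk ξ n ω} := by
  rintro ω ⟨⟨hxk, -⟩, htail⟩
  have hsplit : walk ξ n ω = walk ξ k ω + ∑ i ∈ Finset.Ico k n, ξ i ω :=
    (Finset.sum_range_add_sum_Ico _ hkn).symm
  simp only [Set.mem_ofPred_eq] at htail ⊢
  linarith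

variable [MeasurableSpace Ω] {P : Measure Ω} [IsProbabilityMeasure P]

lemma one_sub_le_measureReal_sum_Ico_nonneg (hmeas : ∀ i, Measurable (ξ i))
    (hindep : iIndepFun ξ P) (hident : ∀ i, IdentDistrib (ξ i) (ξ 0) P P) {c : ℝ}
    (hneg : ∀ m : ℕ, 1 ≤ m → P.real {ω | walk ξ m ω < 0} ≤ c) {k n : ℕ} (hkn : k ≤ n) :
    1 - c ≤ P.real {ω | 0 ≤ ∑ i ∈ Finset.Ico k n, ξ i ω} := by
  rcases hkn.eq_or_lt with rfl | hkn
  · simpa using measureReal_nonneg.trans (hneg 1 le_rfl)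
  have hlaw : P.real {ω | ∑ i ∈ Finset.Ico k n, ξ i ω < 0} =
      P.real {ω | walk ξ (n - k) ω < 0} := by
    simp only [Finset.sum_Ico_eq_sum_range]
    exact congrArg ENNReal.toReal <| (identDistrib_sum_shift hindep hident k (n - k)).measure_mem_eq
      (s := Set.Iio 0) measurableSet_Iio
  have hcompl : {ω | 0 ≤ ∑ i ∈ Finset.Ico k n, ξ i ω} =
      {ω | ∑ i ∈ Finset.Ico k n, ξ i ω < 0}ᶜ := by
    ext ω; simp
  have hmeas_tail : Measurable fun ω => ∑ i ∈ Finset.Ico k n, ξ i ω :=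
    Finset.measurable_sum _ fun i _ => hmeas i
  rw [hcompl, probReal_compl_eq_one_sub (measurableSet_lt hmeas_tail measurable_const), hlaw]
  linarith [hneg (n - k) (by omega)]

lemma one_sub_mul_measureReal_lt_walkMax_le (hmeas : ∀ i, Measurable (ξ i))
    (hindep : iIndepFun ξ P) (hident : ∀ i, IdentDistrib (ξ i) (ξ 0) P P) {c : ℝ}
    (hneg : ∀ m : ℕ, 1 ≤ m → P.real {ω | walk ξ m ω < 0} ≤ c) (n : ℕ) (x : ℝ) :
    (1 - c) * P.real {ω | x < walkMax ξ n ω} ≤ P.real {ω | x < walk ξ n ω} := by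
  set F := firstPassage ξ x
  set B : ℕ → Set Ω := fun k => {ω | 0 ≤ ∑ i ∈ Finset.Ico k n, ξ i ω}
  have hF : ∀ k, MeasurableSet (F k) := fun k =>
    measurableSet_firstPassage fun j _ => measurable_walk hmeas j
  have hB : ∀ k, MeasurableSet (B k) := fun k =>
    measurableSet_le measurable_const (Finset.measurable_sum _ fun i _ => hmeas i)
  have hdisj : (↑(Finset.range (n + 1)) : Set ℕ).PairwiseDisjoint F :=
    (pairwise_disjoint_firstPassage x).set_pairwise _
  have hindepFB : ∀ k, P.real (F k ∩ B k) = P.real (F k) * P.real (B k) := fun k => by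
    simp only [measureReal_def, ← ENNReal.toReal_mul]
    refine congrArg ENNReal.toReal (measure_inter_eq_mul_of_past_future hmeas hindep k ?_ ?_)
    · exact measurableSet_firstPassage fun j hj => measurable_sum_of_subset _ fun i hi =>
        (Finset.mem_range.1 hi).trans_le hj
    · exact measurableSet_le measurable_const <| measurable_sum_of_subset _ fun i hi =>
        (Finset.mem_Ico.1 hi).1
  calc (1 - c) * P.real {ω | x < walkMax ξ n ω}
      = ∑ k ∈ Finset.range (n + 1), (1 - c) * P.real (F k) := by
        rw [setOf_lt_walkMax_eq_biUnion_firstPassage, measureReal_biUnion_finset hdisj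
          fun k _ => hF k, Finset.mul_sum]
    _ ≤ ∑ k ∈ Finset.range (n + 1), P.real (F k ∩ B k) := by
        refine Finset.sum_le_sum fun k hk => ?_
        rw [hindepFB, mul_comm]
        exact mul_le_mul_of_nonneg_left (one_sub_le_measureReal_sum_Ico_nonneg hmeas hindep
          hident hneg (Finset.mem_range_succ_iff.1 hk)) measureReal_nonneg
    _ = P.real (⋃ k ∈ Finset.range (n + 1), F k ∩ B k) :=
        (measureReal_biUnion_finset (hdisj.mono fun k => Set.inter_subset_left)
          fun k _ => (hF k).inter (hB k)).symm
    _ ≤ P.real {ω | x < walk ξ n ω} := measureReal_mono <| Set.iUnion₂_subset fun k hk =>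
        firstPassage_inter_subset (Finset.mem_range_succ_iff.1 hk)

end Ottaviani

lemma exists_le_mul_of_tendsto_div {g : ℝ → ℝ} {L : ℝ} (hmono : MonotoneOn g (Set.Ici 1))
    (hpos : ∀ x, 1 ≤ x → 0 < g x)
    (hlim : Tendsto (fun x => g (2 * x) / g x) atTop (nhds L)) :
    ∃ M, ∀ x, 1 ≤ x → g (2 * x) ≤ M * g x := by
  obtain ⟨y₀, hy₀⟩ := eventually_atTop.1 (hlim.eventually (eventually_le_nhds (lt_add_one L)))
  set z := max y₀ 1
  refine ⟨max (L + 1) (g (2 * z) / g 1), fun x hx => ?_⟩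
  rcases le_or_gt z x with hzx | hxz
  · calc g (2 * x) ≤ (L + 1) * g x :=
          (div_le_iff₀ (hpos x hx)).1 (hy₀ x ((le_max_left _ _).trans hzx))
      _ ≤ _ := by gcongr; exacts [(hpos x hx).le, le_max_left _ _]
  · have hz : 1 ≤ z := le_max_right _ _
    calc g (2 * x) ≤ g (2 * z) := hmono (by simp; linarith) (by simp; linarith) (by linarith)
      _ = g (2 * z) / g 1 * g 1 := (div_mul_cancel₀ _ (hpos 1 le_rfl).ne').symm
      _ ≤ g (2 * z) / g 1 * g x := by
        gcongr
        exacts [div_nonneg (hpos _ (by linarith)).le (hpos 1 le_rfl).le,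
          hmono (Set.mem_Ici.2 le_rfl) hx hx]
      _ ≤ _ := by gcongr; exacts [(hpos x hx).le, le_max_right _ _]

section TailBound

variable {Ω : Type*} [MeasurableSpace Ω] {P : Measure Ω} {g : ℝ → ℝ}

def TailBoundedBy (P : Measure Ω) (X : ℕ → Ω → ℝ) (g : ℝ → ℝ) (K : ℝ) : Prop :=
  ∀ n : ℕ, 1 ≤ n → ∀ x : ℝ, 1 ≤ x → P.real {ω | x < X n ω} ≤ K * n / g x

variable {X Y : ℕ → Ω → ℝ} {K L : ℝ}

lemma TailBoundedBy.mono (h : TailBoundedBy P X g K) (hg : ∀ x, 1 ≤ x → 0 < g x)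
    {K' : ℝ} (hK : K ≤ K') : TailBoundedBy P X g K' := fun n hn x hx =>
  (h n hn x hx).trans <| by gcongr; exact (hg x hx).le

lemma TailBoundedBy.eventually (h : TailBoundedBy P X g K) (hg : ∀ x, 1 ≤ x → 0 < g x) :
    ∀ᶠ K' in atTop, TailBoundedBy P X g K' :=
  (eventually_ge_atTop K).mono fun _ hK => h.mono hg hK

lemma TailBoundedBy.nonneg (h : TailBoundedBy P X g K) (hg : 0 < g 1) : 0 ≤ K := by
  have := measureReal_nonneg.trans (h 1 le_rfl 1 le_rfl)
  rw [Nat.cast_one, mul_one] at this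
  exact (div_nonneg_iff.1 this).elim And.left fun h => absurd h.2 (not_le.2 hg)

protected lemma TailBoundedBy.max (hX : TailBoundedBy P X g K) (hY : TailBoundedBy P Y g L) :
    TailBoundedBy P (fun n ω => max (X n ω) (Y n ω)) g (K + L) := fun n hn x hx => by
  have hunion : {ω | x < max (X n ω) (Y n ω)} = {ω | x < X n ω} ∪ {ω | x < Y n ω} := by
    ext ω; simp
  rw [hunion, add_mul, add_div]
  exact (measureReal_union_le _ _).trans (add_le_add (hX n hn x hx) (hY n hn x hx))

variable [IsProbabilityMeasure P]

lemma TailBoundedBy.of_le (h : TailBoundedBy P Y g K) (hXY : ∀ n ω, X n ω ≤ Y n ω) :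
    TailBoundedBy P X g K := fun n hn x hx =>
  (measureReal_mono fun ω hω => (Set.mem_ofPred_eq ▸ hω).trans_le (hXY n ω)).trans (h n hn x hx)

lemma TailBoundedBy.add (hX : TailBoundedBy P X g K) (hY : TailBoundedBy P Y g L)
    (hg : ∀ x, 1 ≤ x → 0 < g x) (hmono : MonotoneOn g (Set.Ici 1)) {M : ℝ}
    (hM : ∀ x, 1 ≤ x → g (2 * x) ≤ M * g x) :
    TailBoundedBy P (fun n ω => X n ω + Y n ω) g (max ((K + L) * M) (g 2)) := by
  intro n hn x hx
  have hn' : (1 : ℝ) ≤ n := Nat.one_le_cast.2 hn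
  rcases le_or_gt 2 x with hx2 | hx2
  · have hx2' : 1 ≤ x / 2 := by linarith
    have hsub : {ω | x < X n ω + Y n ω} ⊆ {ω | x / 2 < max (X n ω) (Y n ω)} := fun ω hω => by
      simp only [Set.mem_ofPred_eq, lt_max_iff] at hω ⊢
      by_contra! h
      linarith
    have hgx : g x ≤ M * g (x / 2) := by simpa [mul_div_cancel₀] using hM (x / 2) hx2'
    have hKL : 0 ≤ K + L := add_nonneg (hX.nonneg (hg 1 le_rfl)) (hY.nonneg (hg 1 le_rfl))
    calc P.real {ω | x < X n ω + Y n ω} ≤ (K + L) * n / g (x / 2) :=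
          (measureReal_mono hsub).trans (hX.max hY n hn (x / 2) hx2')
      _ ≤ (K + L) * M * n / g x := by
          rw [div_le_div_iff₀ (hg _ hx2') (hg x hx)]
          calc (K + L) * n * g x ≤ (K + L) * n * (M * g (x / 2)) := by gcongr
            _ = (K + L) * M * n * g (x / 2) := by ring
      _ ≤ _ := by gcongr; exacts [(hg x hx).le, le_max_left _ _]
  · calc P.real {ω | x < X n ω + Y n ω} ≤ 1 := measureReal_le_one
      _ ≤ g 2 * n / g x := by
          rw [one_le_div (hg x hx)]
          nlinarith [hmono (Set.mem_Ici.2 hx) (Set.mem_Ici.2 one_le_two) hx2.le, hg 2 one_le_two]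
      _ ≤ _ := by gcongr; exacts [(hg x hx).le, le_max_right _ _]

end TailBound

section WalkTailBounds

variable {Ω : Type*} [MeasurableSpace Ω] {P : Measure Ω} [IsProbabilityMeasure P]
  {ξ : ℕ → Ω → ℝ} {g : ℝ → ℝ} {C c : ℝ}

lemma tailBoundedBy_walkMax (hmeas : ∀ i, Measurable (ξ i)) (hindep : iIndepFun ξ P)
    (hident : ∀ i, IdentDistrib (ξ i) (ξ 0) P P) (hc : c < 1)
    (hneg : ∀ m : ℕ, 1 ≤ m → P.real {ω | walk ξ m ω < 0} ≤ c)
    (hup : TailBoundedBy P (walk ξ) g C) : TailBoundedBy P (walkMax ξ) g (C / (1 - c)) :=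
  fun n hn x hx => calc
    P.real {ω | x < walkMax ξ n ω} ≤ C * n / g x / (1 - c) := (le_div_iff₀' (sub_pos.2 hc)).2 <|
      (one_sub_mul_measureReal_lt_walkMax_le hmeas hindep hident hneg n x).trans (hup n hn x hx)
    _ = C / (1 - c) * n / g x := by ring

lemma tailBoundedBy_neg_walkMin (hmeas : ∀ i, Measurable (ξ i)) (hindep : iIndepFun ξ P)
    (hident : ∀ i, IdentDistrib (ξ i) (ξ 0) P P) (hc : c < 1)
    (hpos : ∀ m : ℕ, 1 ≤ m → P.real {ω | 0 < walk ξ m ω} ≤ c)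
    (hdown : ∀ n : ℕ, 1 ≤ n → ∀ x : ℝ, 1 ≤ x → P.real {ω | walk ξ n ω < -x} ≤ C * n / g x) :
    TailBoundedBy P (fun n ω => -walkMin ξ n ω) g (C / (1 - c)) := by
  have h := tailBoundedBy_walkMax (ξ := fun i ω => -ξ i ω) (fun i => (hmeas i).neg)
    (hindep.comp (fun _ y => -y) fun _ => measurable_neg) (fun i => (hident i).comp measurable_neg)
    hc (by simpa only [walk_neg, neg_lt_zero] using hpos)
    (by simpa only [TailBoundedBy, walk_neg, lt_neg] using hdown)
  simpa only [TailBoundedBy, walkMax_neg] using h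

end WalkTailBounds

theorem fluctuation_bounds_from_marginal_bounds_general
    {Ω : Type*} [MeasurableSpace Ω] (P : Measure Ω) [IsProbabilityMeasure P]
    (ξ : ℕ → Ω → ℝ) (hmeas : ∀ i, Measurable (ξ i))
    (hindep : iIndepFun ξ P)
    (hident : ∀ i, IdentDistrib (ξ i) (ξ 0) P P)
    (a ainv : ℝ → ℝ) (α : ℝ)
    (ha_mono : StrictMonoOn a (Set.Ici 1))
    (hainv_right : ∀ y : ℝ, 1 ≤ y → a (ainv y) = y)
    (hainv_maps : ∀ y : ℝ, 1 ≤ y → 1 ≤ ainv y)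
    (hainv_rv : ∀ l : ℝ, 0 < l →
      Tendsto (fun x : ℝ => ainv (l * x) / ainv x) atTop (nhds (l ^ α)))
    (hneg : ∃ c : ℝ, c < 1 ∧ ∀ m : ℕ, 1 ≤ m → (P {ω | walk ξ m ω < 0}).toReal ≤ c)
    (hpos : ∃ c : ℝ, c < 1 ∧ ∀ m : ℕ, 1 ≤ m → (P {ω | 0 < walk ξ m ω}).toReal ≤ c)
    (C : ℝ)
    (hup : ∀ n : ℕ, 1 ≤ n → ∀ x : ℝ, 1 ≤ x →
      (P {ω | x < walk ξ n ω}).toReal ≤ C * n / ainv x)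
    (hdown : ∀ n : ℕ, 1 ≤ n → ∀ x : ℝ, 1 ≤ x →
      (P {ω | walk ξ n ω < -x}).toReal ≤ C * n / ainv x) :
    ∃ C' : ℝ, ∀ n : ℕ, 1 ≤ n → ∀ x : ℝ, 1 ≤ x →
      (P {ω | x < walkMax ξ n ω}).toReal ≤ C' * n / ainv x ∧
      (P {ω | x < -walkMin ξ n ω}).toReal ≤ C' * n / ainv x ∧
      (P {ω | x < walkAbsMax ξ n ω}).toReal ≤ C' * n / ainv x ∧
      (P {ω | x < reflMax ξ n ω}).toReal ≤ C' * n / ainv x := by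
  obtain ⟨c₁, hc₁, hneg⟩ := hneg
  obtain ⟨c₂, hc₂, hpos⟩ := hpos
  have hg : ∀ x, 1 ≤ x → 0 < ainv x := fun x hx => one_pos.trans_le (hainv_maps x hx)
  have hmono : MonotoneOn ainv (Set.Ici 1) := fun u hu v hv huv =>
    (ha_mono.le_iff_le (hainv_maps u hu) (hainv_maps v hv)).1 <| by
      rwa [hainv_right u hu, hainv_right v hv]
  obtain ⟨M, hM⟩ := exists_le_mul_of_tendsto_div hmono hg (hainv_rv 2 two_pos)
  have hmax := tailBoundedBy_walkMax hmeas hindep hident hc₁ hneg hup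
  have hmin := tailBoundedBy_neg_walkMin hmeas hindep hident hc₂ hpos hdown
  have habs := (hmax.max hmin).of_le (walkAbsMax_le ξ)
  have hrefl := (hmax.add hmin hg hmono hM).of_le fun n ω =>
    (reflMax_le_walkMax_sub_walkMin ξ n ω).trans_eq (sub_eq_add_neg _ _)
  obtain ⟨K, h₁, h₂, h₃, h₄⟩ := ((hmax.eventually hg).and <| (hmin.eventually hg).and <|
    (habs.eventually hg).and (hrefl.eventually hg)).exists
  exact ⟨K, fun n hn x hx => ⟨h₁ n hn x hx, h₂ n hn x hx, h₃ n hn x hx, h₄ n hn x hx⟩⟩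

/-- Let `a : [1,∞) → [1,∞)` be continuous, strictly increasing,
unbounded, `a(1) = 1`, with inverse `a⁻¹` regularly varying with index `α > 0`.  If
`sup_m P(S_m < 0) < 1`, `sup_m P(S_m > 0) < 1` and `P(S_n > x) ≤ C n / a⁻¹(x)`,
`P(S_n < -x) ≤ C n / a⁻¹(x)` for all `n ≥ 1`, `x ≥ 1`, then there is `C'` with
`P(max S_k > x), P(-min S_k > x), P(max |S_k| > x), P(V^#_n > x) ≤ C' n / a⁻¹(x)`. -/
theorem fluctuation_bounds_from_marginal_bounds
    {Ω : Type*} [MeasurableSpace Ω] (P : Measure Ω) [IsProbabilityMeasure P]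
    (ξ : ℕ → Ω → ℝ) (hmeas : ∀ i, Measurable (ξ i))
    (hindep : iIndepFun ξ P)
    (hident : ∀ i, IdentDistrib (ξ i) (ξ 0) P P)
    (a ainv : ℝ → ℝ) (α : ℝ) (hα : 0 < α)
    (ha_cont : ContinuousOn a (Set.Ici 1))
    (ha_mono : StrictMonoOn a (Set.Ici 1))
    (ha_top : Tendsto a atTop atTop)
    (ha_one : a 1 = 1)
    (ha_maps : ∀ x : ℝ, 1 ≤ x → 1 ≤ a x)
    (hainv_left : ∀ x : ℝ, 1 ≤ x → ainv (a x) = x)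
    (hainv_right : ∀ y : ℝ, 1 ≤ y → a (ainv y) = y)
    (hainv_maps : ∀ y : ℝ, 1 ≤ y → 1 ≤ ainv y)
    (hainv_rv : ∀ l : ℝ, 0 < l →
      Tendsto (fun x : ℝ => ainv (l * x) / ainv x) atTop (nhds (l ^ α)))
    (hneg : ∃ c : ℝ, c < 1 ∧ ∀ m : ℕ, 1 ≤ m → (P {ω | walk ξ m ω < 0}).toReal ≤ c)
    (hpos : ∃ c : ℝ, c < 1 ∧ ∀ m : ℕ, 1 ≤ m → (P {ω | 0 < walk ξ m ω}).toReal ≤ c)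
    (C : ℝ)
    (hup : ∀ n : ℕ, 1 ≤ n → ∀ x : ℝ, 1 ≤ x →
      (P {ω | x < walk ξ n ω}).toReal ≤ C * n / ainv x)
    (hdown : ∀ n : ℕ, 1 ≤ n → ∀ x : ℝ, 1 ≤ x →
      (P {ω | walk ξ n ω < -x}).toReal ≤ C * n / ainv x) :
    ∃ C' : ℝ, ∀ n : ℕ, 1 ≤ n → ∀ x : ℝ, 1 ≤ x →
      (P {ω | x < walkMax ξ n ω}).toReal ≤ C' * n / ainv x ∧
      (P {ω | x < -walkMin ξ n ω}).toReal ≤ C' * n / ainv x ∧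
      (P {ω | x < walkAbsMax ξ n ω}).toReal ≤ C' * n / ainv x ∧
      (P {ω | x < reflMax ξ n ω}).toReal ≤ C' * n / ainv x :=
  fluctuation_bounds_from_marginal_bounds_general P ξ hmeas hindep hident a ainv α ha_mono
    hainv_right hainv_maps hainv_rv hneg hpos C hup hdown
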